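/- arXiv:2301.01822 — 2 statements merged into one kernel-verified Lean document; each statement's English description precedes it below -/
import Mathlib

section
/- Let α > 0. The supremum over b ∈ ℂ of the area of M_α(B⁴(1)) ∩ {z₂ = b} is attained at b = 0, i.e., for every b ∈ ℝ², the area of the slice {(x₁,y₁) : (x₁,y₁,b₁,b₂) ∈ M_α(B⁴(1))} is at most the area of the slice at b = 0. -/
open Matrix MeasureTheory

/-- The matrix `M_α` on `ℝ⁴` with coordinates `(x₁,y₁,x₂,y₂)`. -/
noncomputable def Mmat (α : ℝ) : Matrix (Fin 4) (Fin 4) ℝ :=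
  !![α, 0, 0, -1;
     0, 1/α, 0, 0;
     0, -1, α, 0;
     0, 0, 0, 1/α]

/-- The slice of `M_α(B⁴(1))` over `z₂ = b`, viewed as a subset of `ℝ²`. -/
def mslice (α : ℝ) (b : ℝ × ℝ) : Set (ℝ × ℝ) :=
  {p : ℝ × ℝ | ∃ u : Fin 4 → ℝ, (∑ i, u i ^ 2) < 1 ∧
    (Mmat α).mulVec u = ![p.1, p.2, b.1, b.2]}

/-!
If `u ↦ (f u, g u)` is linear and `u` ranges over a ball centred at `0`, every `u` with `g u = b`
splits as `u = k + w` with `k` the orthogonal projection of `u` onto `ker g` and `w ⊥ ker g` depending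
only on `b`. Since `‖k‖ ≤ ‖u‖`, the slice over `b` lies in the translate `f w + (slice over 0)`, and
translation invariance of Lebesgue measure gives the inequality.
-/

open Metric

section Slices

variable {F E G : Type*} [NormedAddCommGroup F] [InnerProductSpace ℝ F] [FiniteDimensional ℝ F]
  [AddCommGroup E] [Module ℝ E] [AddCommGroup G] [Module ℝ G]

theorem exists_slice_image_ball_subset_preimage_add (T : F →ₗ[ℝ] E × G) (r : ℝ) (b : G) :
    ∃ v : E, (·, b) ⁻¹' (T '' ball 0 r) ⊆ (· + v) ⁻¹' ((·, 0) ⁻¹' (T '' ball 0 r)) := by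
  set K := LinearMap.ker (LinearMap.snd ℝ E G ∘ₗ T)
  rcases em (∃ u₀, (T u₀).2 = b) with ⟨u₀, hu₀⟩ | hb
  swap
  · exact ⟨0, fun p ⟨u, _, hu⟩ => (hb ⟨u, by rw [hu]⟩).elim⟩
  refine ⟨-(T (u₀ - K.starProjection u₀)).1, ?_⟩
  rintro p ⟨u, hu, hTu⟩
  have hK : u - u₀ ∈ K := by simp [K, hTu, hu₀]
  have hperp : u - K.starProjection u = u₀ - K.starProjection u₀ := by
    rw [sub_eq_sub_iff_sub_eq_sub, ← map_sub, K.starProjection_eq_self_iff.2 hK]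
  refine ⟨K.starProjection u, ?_, ?_⟩
  · simpa using (K.norm_starProjection_apply_le u).trans_lt (mem_ball_zero_iff.1 hu)
  · refine Prod.ext ?_ (K.starProjection_apply_mem u)
    simp [← hperp, hTu]

theorem measure_slice_image_ball_le [MeasurableSpace E] [MeasurableAdd E] (μ : Measure E)
    [μ.IsAddRightInvariant] (T : F →ₗ[ℝ] E × G) (r : ℝ) (b : G) :
    μ ((·, b) ⁻¹' (T '' ball 0 r)) ≤ μ ((·, 0) ⁻¹' (T '' ball 0 r)) := by
  obtain ⟨v, hv⟩ := exists_slice_image_ball_subset_preimage_add T r b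
  exact (measure_mono hv).trans_eq (measure_preimage_add_right μ v _)

end Slices

def splitMulVec (A : Matrix (Fin 4) (Fin 4) ℝ) :
    EuclideanSpace ℝ (Fin 4) →ₗ[ℝ] (ℝ × ℝ) × (ℝ × ℝ) where
  toFun u := (((A *ᵥ u.ofLp) 0, (A *ᵥ u.ofLp) 1), ((A *ᵥ u.ofLp) 2, (A *ᵥ u.ofLp) 3))
  map_add' u v := by simp [mulVec_add]
  map_smul' c u := by simp [mulVec_smul]

theorem splitMulVec_eq_iff (A : Matrix (Fin 4) (Fin 4) ℝ) (u : EuclideanSpace ℝ (Fin 4))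
    (p b : ℝ × ℝ) : splitMulVec A u = (p, b) ↔ A *ᵥ u.ofLp = ![p.1, p.2, b.1, b.2] := by
  simp [splitMulVec, funext_iff, Fin.forall_fin_succ, Prod.ext_iff, and_assoc]

theorem mslice_eq_slice_image_ball (α : ℝ) (b : ℝ × ℝ) :
    mslice α b = (·, b) ⁻¹' (splitMulVec (Mmat α) '' ball 0 1) := by
  ext p
  simp only [mslice, EuclideanSpace.ball_zero_eq 1 zero_le_one, one_pow, Set.mem_ofPred_eq,
    Set.mem_preimage, Set.mem_image, splitMulVec_eq_iff]
  exact ((WithLp.equiv 2 (Fin 4 → ℝ)).exists_congr_right).symm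

theorem area_slice_le_slice_zero_general (α : ℝ) (b : ℝ × ℝ) :
    volume (mslice α b) ≤ volume (mslice α (0, 0)) := by
  rw [mslice_eq_slice_image_ball, mslice_eq_slice_image_ball]
  exact measure_slice_image_ball_le volume _ 1 b

/-- For `α > 0`, the area of the slice of `M_α(B⁴(1))` at `z₂ = b` is at most the
    area of the slice at `b = 0`; i.e. the supremum of slice areas is attained at `0`. -/
theorem area_slice_le_slice_zero (α : ℝ) (hα : 0 < α) (b : ℝ × ℝ) :
    volume (mslice α b) ≤ volume (mslice α (0, 0)) :=
  area_slice_le_slice_zero_general α b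
end

section
/- For any a > 0 and L > 1 with a² < 1 < L (so that the map A^L is not symplectically conformal), consider n = 2 and the maps on ℝ⁴: there exist symplectic 4×4 matrices U and V such that the top-left 2×2 block of V A^L U equals a·Id₂ and the top-right 2×2 block equals 0, where A^L = diag(1,1,L,L). -/
/-!
For `J0` the coordinate planes `⟨e₀, e₂⟩` and `⟨e₁, e₃⟩` are Lagrangian and dual to each other,
so a matrix acting as `M` on the first and as `N` on the second is symplectic once `Mᵀ N = 1`.
Hence any rows `r₀ ∈ ⟨e₀, e₂⟩`, `r₁ ∈ ⟨e₁, e₃⟩` with `ω(r₀, r₁) = 1` are the first two rows of a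
symplectic matrix `S` with symplectic inverse.

Take `V` with first rows `(1, 0, 1, 0)` and `(0, 1 - q, 0, q)`. The first rows of `V A^L` are
`(1, 0, L, 0)` and `(0, 1 - q, 0, L q)`, whose pairing `1 - q + L² q` equals `a²` for
`q = (a² - 1) / (L² - 1)`. Divided by `a` they are the first rows of a symplectic `S`, and
`U = S⁻¹` turns the first two rows of `V A^L U` into `a e₀` and `a e₁`.
-/

open Matrix

/-- The standard symplectic matrix `J₀` on `ℝ⁴`. -/
def J0 : Matrix (Fin 4) (Fin 4) ℝ :=
  !![0, 1, 0, 0;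
    -1, 0, 0, 0;
     0, 0, 0, 1;
     0, 0, -1, 0]

/-- `M` is symplectic iff `Mᵀ J₀ M = J₀`. -/
def IsSymplMat (M : Matrix (Fin 4) (Fin 4) ℝ) : Prop := Mᵀ * J0 * M = J0

/-- `A^L = diag(1,1,L,L)`, scaling the last two coordinates by `L`. -/
noncomputable def ALmat (L : ℝ) : Matrix (Fin 4) (Fin 4) ℝ :=
  !![1, 0, 0, 0;
     0, 1, 0, 0;
     0, 0, L, 0;
     0, 0, 0, L]

section planeDiag

variable {R : Type*}

def planeDiag [Zero R] (M N : Matrix (Fin 2) (Fin 2) R) : Matrix (Fin 4) (Fin 4) R :=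
  !![M 0 0, 0, M 0 1, 0;
     0, N 0 0, 0, N 0 1;
     M 1 0, 0, M 1 1, 0;
     0, N 1 0, 0, N 1 1]

theorem planeDiag_mul [Semiring R] (M N M' N' : Matrix (Fin 2) (Fin 2) R) :
    planeDiag M N * planeDiag M' N' = planeDiag (M * M') (N * N') := by
  ext i j
  fin_cases i <;> fin_cases j <;> simp [planeDiag, mul_apply, Fin.sum_univ_four, Fin.sum_univ_two]

theorem planeDiag_one [Semiring R] : planeDiag (1 : Matrix (Fin 2) (Fin 2) R) 1 = 1 := by
  ext i j
  fin_cases i <;> fin_cases j <;> simp [planeDiag, one_apply]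

end planeDiag

theorem exists_transpose_mul_eq_one_of_dotProduct_eq_one {R : Type*} [CommRing R]
    (v w : Fin 2 → R) (h : v ⬝ᵥ w = 1) :
    ∃ Z Z' : Matrix (Fin 2) (Fin 2) R, Zᵀ * Z' = 1 ∧ Z 0 = v ∧ Z' 0 = w := by
  rw [dotProduct, Fin.sum_univ_two] at h
  refine ⟨!![v 0, v 1; -w 1, w 0], !![w 0, w 1; -v 1, v 0], ?_, ?_, ?_⟩
  · ext i j
    fin_cases i <;> fin_cases j <;> simp [mul_apply, Fin.sum_univ_two]
    · linear_combination h
    · ring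
    · ring
    · linear_combination h
  all_goals ext j; fin_cases j <;> rfl

theorem isSymplMat_planeDiag {M N : Matrix (Fin 2) (Fin 2) ℝ} (h : Mᵀ * N = 1) :
    IsSymplMat (planeDiag M N) := by
  have hN : ∀ i j, ∑ k, M k i * N k j = (1 : Matrix (Fin 2) (Fin 2) ℝ) i j := fun i j => by
    rw [← h, mul_apply]
    rfl
  simp only [Fin.sum_univ_two, one_apply, Fin.forall_fin_two, reduceIte, zero_ne_one,
    one_ne_zero] at hN
  ext i j
  fin_cases i <;> fin_cases j <;>
    simp [J0, planeDiag, mul_apply, Fin.sum_univ_four] <;> linarith [hN]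

theorem exists_isSymplMat_top_rows (v w : Fin 2 → ℝ) (h : v ⬝ᵥ w = 1) :
    ∃ S S' : Matrix (Fin 4) (Fin 4) ℝ, IsSymplMat S ∧ IsSymplMat S' ∧ S * S' = 1 ∧
      S 0 = ![v 0, 0, v 1, 0] ∧ S 1 = ![0, w 0, 0, w 1] := by
  obtain ⟨Z, Z', hZ, rfl, rfl⟩ := exists_transpose_mul_eq_one_of_dotProduct_eq_one v w h
  have hZ' : Z' * Zᵀ = 1 := mul_eq_one_comm.mp hZ
  have hZ'' : Z * Z'ᵀ = 1 := by simpa using congrArg transpose hZ'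
  refine ⟨planeDiag Z Z', planeDiag Z'ᵀ Zᵀ, isSymplMat_planeDiag hZ,
    isSymplMat_planeDiag (by rwa [transpose_transpose]), ?_, rfl, rfl⟩
  rw [planeDiag_mul, hZ', hZ'', planeDiag_one]

theorem vecMul_ALmat (L : ℝ) (r : Fin 4 → ℝ) :
    r ᵥ* ALmat L = ![r 0, r 1, L * r 2, L * r 3] := by
  ext j
  fin_cases j <;> simp [ALmat, vecMul, dotProduct, Fin.sum_univ_four, mul_comm]

theorem mul_apply_eq_of_row_eq_smul {n R : Type*} [Fintype n] [DecidableEq n] [CommSemiring R]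
    {A S U : Matrix n n R} {i : n} {c : R} (h : A i = c • S i) (hSU : S * U = 1) (j : n) :
    (A * U) i j = c * (1 : Matrix n n R) i j := by
  rw [mul_apply_eq_vecMul, h, smul_vecMul, ← mul_apply_eq_vecMul, hSU]
  rfl

theorem eliashberg_n2_general (a L : ℝ) (ha : 0 < a) (hL : 1 < L) :
    ∃ U V : Matrix (Fin 4) (Fin 4) ℝ, IsSymplMat U ∧ IsSymplMat V ∧
      (V * ALmat L * U) 0 0 = a ∧ (V * ALmat L * U) 0 1 = 0 ∧
      (V * ALmat L * U) 1 0 = 0 ∧ (V * ALmat L * U) 1 1 = a ∧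
      (V * ALmat L * U) 0 2 = 0 ∧ (V * ALmat L * U) 0 3 = 0 ∧
      (V * ALmat L * U) 1 2 = 0 ∧ (V * ALmat L * U) 1 3 = 0 := by
  set q := (a ^ 2 - 1) / (L ^ 2 - 1)
  have hq : 1 - q + L ^ 2 * q = a ^ 2 := by
    have : L ^ 2 - 1 ≠ 0 := by nlinarith
    simp only [q]
    field_simp
    ring
  obtain ⟨V, -, hV, -, -, hV0, hV1⟩ :=
    exists_isSymplMat_top_rows ![1, 1] ![1 - q, q] (by simp [dotProduct, Fin.sum_univ_two])
  obtain ⟨S, U, -, hU, hSU, hS0, hS1⟩ :=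
    exists_isSymplMat_top_rows ![1 / a, L / a] ![(1 - q) / a, L * q / a] (by
      simp only [dotProduct, Fin.sum_univ_two, cons_val_zero, cons_val_one]
      field_simp
      linear_combination hq)
  have hrow0 : (V * ALmat L) 0 = a • S 0 := by
    rw [mul_apply_eq_vecMul, vecMul_ALmat, hV0, hS0]
    ext j; fin_cases j <;> simp <;> field_simp
  have hrow1 : (V * ALmat L) 1 = a • S 1 := by
    rw [mul_apply_eq_vecMul, vecMul_ALmat, hV1, hS1]
    ext j; fin_cases j <;> simp <;> field_simp
  refine ⟨U, V, hU, hV, ?_⟩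
  simp [mul_apply_eq_of_row_eq_smul hrow0 hSU, mul_apply_eq_of_row_eq_smul hrow1 hSU, one_apply]

/-- Eliashberg's lemma, `n = 2`: for `0 < a`, `a² < 1 < L` there are symplectic matrices
    `U, V` such that `V A^L U` has top-left `2×2` block `a·Id₂` and top-right block `0`. -/
theorem eliashberg_n2 (a L : ℝ) (ha : 0 < a) (ha1 : a ^ 2 < 1) (hL : 1 < L) :
    ∃ U V : Matrix (Fin 4) (Fin 4) ℝ, IsSymplMat U ∧ IsSymplMat V ∧
      (V * ALmat L * U) 0 0 = a ∧ (V * ALmat L * U) 0 1 = 0 ∧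
      (V * ALmat L * U) 1 0 = 0 ∧ (V * ALmat L * U) 1 1 = a ∧
      (V * ALmat L * U) 0 2 = 0 ∧ (V * ALmat L * U) 0 3 = 0 ∧
      (V * ALmat L * U) 1 2 = 0 ∧ (V * ALmat L * U) 1 3 = 0 :=
  eliashberg_n2_general a L ha hL
end
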